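/- arXiv:2209.13879 — 6 statements merged into one kernel-verified Lean document; each statement's English description precedes it below -/
import Mathlib

section
/- If an integer square Heffter array H(n;k) exists, then nk ≡ 0 or 3 (mod 4). -/
/-!
Since every row sums to zero, so does the whole array, and as `|a| ≡ a (mod 2)` the sum of the
absolute values of the entries is even. That sum is `1 + 2 + ⋯ + nk = nk(nk + 1)/2`, so
`4 ∣ nk(nk + 1)`, which forces `nk ≡ 0` or `3 (mod 4)`.
-/

open Finset

theorem Finset.sum_Icc_one_id_mul_two (m : ℕ) : (∑ x ∈ Icc 1 m, x) * 2 = m * (m + 1) := by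
  induction m with
  | zero => simp
  | succ m ih => rw [sum_Icc_succ_top (by omega), add_mul, ih]; ring

theorem Nat.mod_four_eq_zero_or_three_of_four_dvd_mul_succ {m : ℕ} (h : 4 ∣ m * (m + 1)) :
    m % 4 = 0 ∨ m % 4 = 3 := by
  have h' := Nat.mod_eq_zero_of_dvd h
  rw [Nat.mul_mod, Nat.add_mod] at h'
  have hlt : m % 4 < 4 := Nat.mod_lt _ (by norm_num)
  interval_cases m % 4 <;> simp_all

theorem Nat.mod_four_eq_zero_or_three_of_even_sum_Icc {m : ℕ} (h : Even (∑ x ∈ Icc 1 m, x)) :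
    m % 4 = 0 ∨ m % 4 = 3 := by
  obtain ⟨s, hs⟩ := h
  apply Nat.mod_four_eq_zero_or_three_of_four_dvd_mul_succ
  rw [← sum_Icc_one_id_mul_two, hs]
  exact ⟨s, by ring⟩

theorem Int.even_sum_natAbs_of_sum_eq_zero {ι : Type*} {s : Finset ι} {f : ι → ℤ}
    (h : ∑ i ∈ s, f i = 0) : Even (∑ i ∈ s, (f i).natAbs) := by
  rw [← Int.even_coe_nat]
  push_cast
  have : Even (∑ i ∈ s, (|f i| - f i)) :=
    even_sum _ fun i _ => by simp [Int.even_sub, even_abs]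
  simpa [sum_sub_distrib, h] using this

theorem sum_natAbs_getD_eq_sum_Icc {ι : Type*} [Fintype ι] (A : ι → Option ℤ) (m : ℕ)
    (hrange : ∀ i a, A i = some a → 1 ≤ |a| ∧ |a| ≤ (m : ℤ))
    (habs : ∀ x : ℤ, 1 ≤ x → x ≤ m → ∃! i, ∃ a, A i = some a ∧ |a| = x) :
    ∑ i, ((A i).getD 0).natAbs = ∑ x ∈ Icc 1 m, x := by
  classical
  rw [← sum_filter_of_ne (p := fun i => (A i).isSome) fun i _ hi => ?_]
  · refine sum_nbij (fun i => ((A i).getD 0).natAbs) ?_ ?_ ?_ fun _ _ => rfl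
    · intro i hi
      obtain ⟨a, ha⟩ := Option.isSome_iff_exists.mp (mem_filter.mp hi).2
      have hbound := hrange i a ha
      rw [Int.abs_eq_natAbs] at hbound
      simp only [ha, Option.getD_some, mem_Icc]
      omega
    · intro i hi j hj hij
      obtain ⟨a, ha⟩ := Option.isSome_iff_exists.mp (mem_filter.mp hi).2
      obtain ⟨b, hb⟩ := Option.isSome_iff_exists.mp (mem_filter.mp hj).2
      simp only [ha, hb, Option.getD_some] at hij
      have hbound := hrange i a ha
      refine (habs |a| hbound.1 hbound.2).unique ⟨a, ha, rfl⟩ ⟨b, hb, ?_⟩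
      rw [Int.abs_eq_natAbs, Int.abs_eq_natAbs, hij]
    · intro x hx
      obtain ⟨hx1, hx2⟩ := mem_Icc.mp hx
      obtain ⟨i, ⟨a, ha, hax⟩, -⟩ := habs x (by omega) (by omega)
      rw [Int.abs_eq_natAbs] at hax
      exact ⟨i, by simp [ha], by simp [ha]; omega⟩
  · cases h : A i <;> simp_all

theorem integer_square_heffter_congruence_general (n k : ℕ) (A : Fin n → Fin n → Option ℤ)
    (hrange : ∀ i j a, A i j = some a → 1 ≤ |a| ∧ |a| ≤ (n * k : ℤ))
    (habs : ∀ x : ℤ, 1 ≤ x → x ≤ (n * k : ℤ) →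
      ∃! p : Fin n × Fin n, ∃ a, A p.1 p.2 = some a ∧ |a| = x)
    (hrsum : ∀ i, ∑ j, (A i j).getD 0 = 0) :
    n * k % 4 = 0 ∨ n * k % 4 = 3 := by
  have htotal : ∑ p : Fin n × Fin n, (A p.1 p.2).getD 0 = 0 := by
    simp [Fintype.sum_prod_type, hrsum]
  apply Nat.mod_four_eq_zero_or_three_of_even_sum_Icc
  rw [← sum_natAbs_getD_eq_sum_Icc (fun p : Fin n × Fin n => A p.1 p.2) (n * k)
    (fun p a ha => by push_cast; exact hrange p.1 p.2 a ha)
    (fun x hx1 hx2 => habs x hx1 (by exact_mod_cast hx2))]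
  exact Int.even_sum_natAbs_of_sum_eq_zero htotal

/-- If an integer square Heffter array `H(n;k)` exists, then
`nk ≡ 0` or `3 (mod 4)`. The array is an `n × n` partially filled integer matrix with `k`
filled cells in each row and column, whose entries have absolute values exactly
`{1,...,nk}` each occurring once, and every row and column sums to `0` in `ℤ`. -/
theorem integer_square_heffter_congruence (n k : ℕ) (A : Fin n → Fin n → Option ℤ)
    (hrow : ∀ i, (Finset.univ.filter fun j => (A i j).isSome).card = k)
    (hcol : ∀ j, (Finset.univ.filter fun i => (A i j).isSome).card = k)
    (hrange : ∀ i j a, A i j = some a → 1 ≤ |a| ∧ |a| ≤ (n * k : ℤ))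
    (habs : ∀ x : ℤ, 1 ≤ x → x ≤ (n * k : ℤ) →
      ∃! p : Fin n × Fin n, ∃ a, A p.1 p.2 = some a ∧ |a| = x)
    (hrsum : ∀ i, ∑ j, (A i j).getD 0 = 0)
    (hcsum : ∀ j, ∑ i, (A i j).getD 0 = 0) :
    n * k % 4 = 0 ∨ n * k % 4 = 3 :=
  integer_square_heffter_congruence_general n k A hrange habs hrsum
end

section
/- Let T be a subset of an abelian group G with 0 ∉ T, containing no pair {x,-x}, with |T| = 5 and with the sum of the elements of T equal to 0. Then T admits a simple ordering. -/
/-!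
Every ordering of `T` is simple. The difference of two partial sums is the sum of a block of
consecutive terms. As the five terms sum to `0`, a block of three or four terms is the negative of
the complementary (cyclic) block of one or two terms, so every block sum is `± t` or `± (t + t')`
with `t, t' ∈ T`, and these are nonzero because `0 ∉ T` and `T` contains no pair `{x, -x}`.
-/

section PartialSums

variable {G : Type*} [AddCommGroup G]

def partialSums (l : List G) : List G :=
  (List.range l.length).map fun i => (l.take (i + 1)).sum

theorem nodup_partialSums_of_sum_ne_zero (l : List G)
    (h : ∀ i j, i < j → j < l.length → ((l.take (j + 1)).drop (i + 1)).sum ≠ 0) :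
    (partialSums l).Nodup := by
  have hlt : ∀ i j, i < j → j < l.length → (l.take (i + 1)).sum ≠ (l.take (j + 1)).sum := by
    intro i j hij hj heq
    apply h i j hij hj
    have hsplit := (l.take (j + 1)).sum_take_add_sum_drop (i + 1)
    rwa [List.take_take, min_eq_left (by omega), heq, add_eq_left] at hsplit
  refine List.nodup_range.map_on fun i hi j hj heq => ?_
  rw [List.mem_range] at hi hj
  rcases lt_trichotomy i j with hij | rfl | hji
  · exact absurd heq (hlt i j hij hj)
  · rfl
  · exact absurd heq.symm (hlt j i hji hi)

theorem sum_drop_take_five_ne_zero {S : Set G} (hS₁ : ∀ x ∈ S, x ≠ 0)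
    (hS₂ : ∀ x ∈ S, ∀ y ∈ S, x + y ≠ 0) {a b c d e : G} (ha : a ∈ S) (hb : b ∈ S)
    (hc : c ∈ S) (hd : d ∈ S) (he : e ∈ S) (hsum : a + b + c + d + e = 0) (i j : ℕ)
    (hij : i < j) (hj : j < 5) :
    (([a, b, c, d, e].take (j + 1)).drop (i + 1)).sum ≠ 0 := by
  have ne_zero_of_add_eq_zero : ∀ x y : G, x + y = 0 → y ≠ 0 → x ≠ 0 :=
    fun x y hxy hy hx => hy (by simpa [hx] using hxy)
  interval_cases j <;> interval_cases i <;>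
    simp only [List.take, List.drop, List.sum_cons, List.sum_nil, add_zero]
  -- goals: b, b + c, c, b + c + d, c + d, d, b + c + d + e, c + d + e, d + e, e
  exacts [hS₁ b hb, hS₂ b hb c hc, hS₁ c hc,
    ne_zero_of_add_eq_zero _ (e + a) (by rw [← hsum]; abel) (hS₂ e he a ha),
    hS₂ c hc d hd, hS₁ d hd,
    ne_zero_of_add_eq_zero _ a (by rw [← hsum]; abel) (hS₁ a ha),
    ne_zero_of_add_eq_zero _ (a + b) (by rw [← hsum]; abel) (hS₂ a ha b hb),
    hS₂ d hd e he, hS₁ e he]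

end PartialSums

/-- Let `T` be a subset of an abelian group `G` with `0 ∉ T`, containing no pair
`{x,-x}`, with `|T| = 5` and sum of elements `0`. Then `T` admits a simple ordering, i.e. an
ordering of its elements whose partial sums are pairwise distinct. -/
theorem five_subset_has_simple_ordering {G : Type*} [AddCommGroup G] [DecidableEq G]
    (T : Finset G) (h0 : (0 : G) ∉ T) (hcard : T.card = 5)
    (hpair : ∀ x ∈ T, -x ∉ T) (hsum : ∑ x ∈ T, x = 0) :
    ∃ l : List G, l.Nodup ∧ l.toFinset = T ∧
      ((List.range l.length).map fun i => (l.take (i + 1)).sum).Nodup := by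
  have hT₁ : ∀ x ∈ T, x ≠ 0 := fun x hx h => h0 (h ▸ hx)
  have hT₂ : ∀ x ∈ T, ∀ y ∈ T, x + y ≠ 0 :=
    fun x hx y hy h => hpair x hx (neg_eq_of_add_eq_zero_right h ▸ hy)
  obtain ⟨a, b, c, d, e, hl⟩ : ∃ a b c d e, T.toList = [a, b, c, d, e] := by
    match T.toList, (by simp [hcard] : T.toList.length = 5) with
    | [a, b, c, d, e], _ => exact ⟨a, b, c, d, e, rfl⟩
  have hmem : ∀ x ∈ [a, b, c, d, e], x ∈ T := fun x hx => by rwa [← Finset.mem_toList, hl]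
  have hsum₅ : a + b + c + d + e = 0 := by
    simpa [hl, add_assoc] using (T.sum_toList).trans hsum
  refine ⟨T.toList, T.nodup_toList, T.toList_toFinset, ?_⟩
  rw [hl]
  exact nodup_partialSums_of_sum_ne_zero _ <|
    sum_drop_take_five_ne_zero hT₁ hT₂ (hmem a (by simp)) (hmem b (by simp)) (hmem c (by simp))
      (hmem d (by simp)) (hmem e (by simp)) hsum₅
end

section
/- Let T ⊆ Z_v \ {0} with |T| = v - 1 (i.e. T = Z_v \ {0}) and suppose the sum of the elements of T is nonzero (equivalently, v is even). Then there exists an ordering of the elements of T such that all partial sums are distinct and nonzero. -/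
/-!
For `v = 2n` take the ordering `1, -2, 3, -4, …, -(2n-2), 2n-1`. Its partial sums are
`1, -1, 2, -2, …, -(n-1), n`: integers in the window `(-n, n]` of length `v` avoiding `0`, hence
distinct and nonzero modulo `v`. Terms of equal parity differ by less than `v`, and terms of
opposite parity differ by an odd number, which `v` cannot divide; so the terms are distinct too.
`v` is even because for odd `v` the map `x ↦ -x` gives `2 • ∑ x = 0` and `2` is a unit.
-/

open Finset

theorem ZMod.sum_univ_eq_zero_of_odd {v : ℕ} [NeZero v] (hv : Odd v) :
    ∑ x : ZMod v, x = 0 := by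
  have hneg : ∑ x : ZMod v, x = -∑ x : ZMod v, x := by
    rw [← sum_neg_distrib]
    exact (Equiv.sum_comp (Equiv.neg (ZMod v)) id).symm
  have htwo : IsUnit (2 : ZMod v) := by
    exact_mod_cast (ZMod.isUnit_iff_coprime 2 v).mpr (Nat.coprime_two_left.mpr hv)
  refine htwo.mul_right_eq_zero.mp ?_
  rw [two_mul]; nth_rewrite 2 [hneg]; exact add_neg_cancel _

theorem ZMod.eq_of_intCast_eq_of_abs_sub_lt {v : ℕ} {a b : ℤ} (h : (a : ZMod v) = b)
    (hab : |b - a| < v) : a = b :=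
  have hdvd := (ZMod.intCast_eq_intCast_iff_dvd_sub a b v).mp h
  (sub_eq_zero.mp (Int.eq_zero_of_abs_lt_dvd hdvd hab)).symm

def altTerm (k : ℕ) : ℤ := (-1) ^ k * (k + 1)

def altPartialSum (i : ℕ) : ℤ := (-1) ^ i * (i / 2 + 1 : ℕ)

theorem sum_range_altTerm (i : ℕ) : ∑ k ∈ range (i + 1), altTerm k = altPartialSum i := by
  induction i with
  | zero => simp [altTerm, altPartialSum]
  | succ i ih =>
    have hhalf : (((i + 1) / 2 + 1 : ℕ) : ℤ) = (i + 2) - (i / 2 + 1 : ℕ) := by omega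
    rw [sum_range_succ, ih, altPartialSum, altPartialSum, altTerm, hhalf, pow_succ]
    push_cast
    ring

theorem abs_altTerm (k : ℕ) : |altTerm k| = k + 1 := by
  rw [altTerm, abs_mul, abs_neg_one_pow, one_mul]; exact abs_of_pos (by positivity)

theorem abs_altPartialSum (i : ℕ) : |altPartialSum i| = (i / 2 + 1 : ℕ) := by
  rw [altPartialSum, abs_mul, abs_neg_one_pow, one_mul, Nat.abs_cast]

theorem neg_one_pow_eq_one_or_neg_one_mod_two (k : ℕ) :
    ((-1 : ℤ) ^ k = 1 ∧ k % 2 = 0) ∨ ((-1 : ℤ) ^ k = -1 ∧ k % 2 = 1) := by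
  rcases Nat.even_or_odd k with h | h
  · exact .inl ⟨h.neg_one_pow, Nat.even_iff.mp h⟩
  · exact .inr ⟨h.neg_one_pow, Nat.odd_iff.mp h⟩

theorem altTerm_injOn {v : ℕ} (hv : Even v) :
    Set.InjOn (fun k ↦ (altTerm k : ZMod v)) (Set.Iio (v - 1)) := by
  intro k hk k' hk' h
  simp only [Set.mem_Iio] at hk hk'
  have hdvd := (ZMod.intCast_eq_intCast_iff_dvd_sub _ _ v).mp h
  have htwo : (2 : ℤ) ∣ altTerm k' - altTerm k :=
    (Int.natCast_dvd_natCast.mpr (even_iff_two_dvd.mp hv)).trans hdvd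
  have heq := ZMod.eq_of_intCast_eq_of_abs_sub_lt h
  -- equal parity: the terms differ by less than `v`; opposite parity: they differ by an odd number
  rcases neg_one_pow_eq_one_or_neg_one_mod_two k with ⟨hs, hk2⟩ | ⟨hs, hk2⟩ <;>
    rcases neg_one_pow_eq_one_or_neg_one_mod_two k' with ⟨hs', hk2'⟩ | ⟨hs', hk2'⟩ <;>
    simp only [altTerm, hs, hs'] at heq htwo <;>
    first | omega | (have := heq (by rw [abs_lt]; omega); omega)

theorem altPartialSum_injOn {v : ℕ} (hv : Even v) :
    Set.InjOn (fun i ↦ (altPartialSum i : ZMod v)) (Set.Iio (v - 1)) := by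
  intro i hi j hj h
  simp only [Set.mem_Iio] at hi hj
  have heq := ZMod.eq_of_intCast_eq_of_abs_sub_lt h
  have hv2 : v % 2 = 0 := Nat.even_iff.mp hv
  -- all partial sums lie in the window `(-v/2, v/2]`
  rcases neg_one_pow_eq_one_or_neg_one_mod_two i with ⟨hs, hi2⟩ | ⟨hs, hi2⟩ <;>
    rcases neg_one_pow_eq_one_or_neg_one_mod_two j with ⟨hs', hj2⟩ | ⟨hs', hj2⟩ <;>
    simp only [altPartialSum, hs, hs'] at heq <;>
    (have := heq (by rw [abs_lt]; omega); omega)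

theorem intCast_altTerm_ne_zero {v k : ℕ} (hk : k < v - 1) : (altTerm k : ZMod v) ≠ 0 := by
  have hk0 : altTerm k ≠ 0 := by rw [← abs_pos, abs_altTerm]; positivity
  rw [← Int.cast_zero]
  exact fun h ↦ hk0 (ZMod.eq_of_intCast_eq_of_abs_sub_lt h
    (by rw [zero_sub, abs_neg, abs_altTerm]; omega))

theorem intCast_altPartialSum_ne_zero {v i : ℕ} (hi : i < v - 1) :
    (altPartialSum i : ZMod v) ≠ 0 := by
  have hi0 : altPartialSum i ≠ 0 := by rw [← abs_pos, abs_altPartialSum]; positivity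
  rw [← Int.cast_zero]
  exact fun h ↦ hi0 (ZMod.eq_of_intCast_eq_of_abs_sub_lt h
    (by rw [zero_sub, abs_neg, abs_altPartialSum]; omega))

def altOrdering (v : ℕ) : List (ZMod v) :=
  (List.range (v - 1)).map fun k ↦ (altTerm k : ZMod v)

theorem length_altOrdering (v : ℕ) : (altOrdering v).length = v - 1 := by simp [altOrdering]

theorem sum_take_altOrdering {v i : ℕ} (hi : i < v - 1) :
    ((altOrdering v).take (i + 1)).sum = altPartialSum i := by
  rw [altOrdering, ← List.map_take, List.take_range, min_eq_left hi, ← sum_range_altTerm,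
    Int.cast_sum]
  rfl

theorem nodup_altOrdering {v : ℕ} (hv : Even v) : (altOrdering v).Nodup :=
  List.nodup_range.map_on fun _ hk _ hk' ↦
    altTerm_injOn hv (List.mem_range.mp hk) (List.mem_range.mp hk')

theorem toFinset_altOrdering {v : ℕ} [NeZero v] (hv : Even v) :
    (altOrdering v).toFinset = univ \ {0} := by
  refine eq_of_subset_of_card_le (fun x hx ↦ ?_) ?_
  · simp only [altOrdering, List.mem_toFinset, List.mem_map, List.mem_range] at hx
    obtain ⟨k, hk, rfl⟩ := hx
    simpa using intCast_altTerm_ne_zero hk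
  · rw [List.toFinset_card_of_nodup (nodup_altOrdering hv), length_altOrdering,
      card_sdiff_of_subset (subset_univ {0}), card_univ, ZMod.card, card_singleton]

/-- Let `T = Z_v \ {0}` (so `|T| = v - 1`) and suppose the sum of the elements
of `T` is nonzero (equivalently, `v` is even). Then there is an ordering of the elements of
`T` all of whose partial sums are distinct and nonzero. (Bode–Harborth, case `|T| = v-1`.) -/
theorem bode_harborth_full_set (v : ℕ) [NeZero v]
    (T : Finset (ZMod v)) (hT : T = Finset.univ \ {0})
    (hsum : ∑ x ∈ T, x ≠ 0) :
    ∃ l : List (ZMod v), l.Nodup ∧ l.toFinset = T ∧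
      ((List.range l.length).map fun i => (l.take (i + 1)).sum).Nodup ∧
      ∀ i < l.length, (l.take (i + 1)).sum ≠ 0 := by
  subst hT
  have hv : Even v := by
    refine Nat.not_odd_iff_even.mp fun hodd ↦ hsum ?_
    rw [sdiff_singleton_eq_erase, sum_erase univ (f := fun x ↦ x) rfl]
    exact ZMod.sum_univ_eq_zero_of_odd hodd
  refine ⟨altOrdering v, nodup_altOrdering hv, toFinset_altOrdering hv, ?_, fun i hi ↦ ?_⟩
  · rw [length_altOrdering]
    refine List.nodup_range.map_on fun i hi j hj hij ↦ ?_
    rw [List.mem_range] at hi hj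
    rw [sum_take_altOrdering hi, sum_take_altOrdering hj] at hij
    exact altPartialSum_injOn hv hi hj hij
  · rw [length_altOrdering] at hi
    rw [sum_take_altOrdering hi]
    exact intCast_altPartialSum_ne_zero hi
end

section
/- Let ω_r and ω_c be compatible orderings of the rows and columns of a Heffter array H(m,n;h,k), meaning ω_r is a product of m disjoint cycles (one per row, of length h, on the filled cells), ω_c is a product of n disjoint cycles (one per column, of length k), and ω_r ∘ ω_c is a single cycle of length nk. Then either (1) m, n, h, k are all odd; or (2) m is odd, n is even and h is even; or (3) m is even, n is odd and k is even. -/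
/-!
An `l`-cycle has sign `(-1)^(l+1)`, so taking signs in `sign (ω_r ω_c) = sign ω_r * sign ω_c`
gives `nk + 1 ≡ m(h + 1) + n(k + 1) (mod 2)`. Since `mh = nk`, this says that `m + n + nk` is
odd, and the three cases are exactly the parity patterns compatible with that and `mh = nk`.
-/

open Equiv Multiset

theorem Equiv.Perm.sign_eq_neg_one_pow_of_cycleType_eq_replicate {α : Type*} [Fintype α]
    [DecidableEq α] {σ : Perm α} {m l : ℕ} (h : σ.cycleType = replicate m l) :
    Perm.sign σ = (-1) ^ (m * l + m) := by
  rw [Perm.sign_of_cycleType, h, sum_replicate, card_replicate, smul_eq_mul]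

theorem Int.even_iff_even_of_units_neg_one_pow_eq {a b : ℕ} (h : (-1 : ℤˣ) ^ a = (-1) ^ b) :
    Even a ↔ Even b := by
  rw [← neg_one_pow_eq_one_iff_even (R := ℤˣ) (by decide),
    ← neg_one_pow_eq_one_iff_even (R := ℤˣ) (by decide), h]

theorem parity_cases_of_mul_eq_of_odd {m n h k : ℕ} (hmh : m * h = n * k)
    (hodd : Odd (m + n + n * k)) :
    (Odd m ∧ Odd n ∧ Odd h ∧ Odd k) ∨ (Odd m ∧ Even n ∧ Even h) ∨ (Even m ∧ Odd n ∧ Even k) := by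
  have hpar : Even (m * h) ↔ Even (n * k) := by rw [hmh]
  simp only [← Nat.not_even_iff_odd, Nat.even_add, Nat.even_mul] at hodd hpar ⊢
  tauto

/-- Let `ω_r` and `ω_c` be compatible orderings of the rows and columns of a
Heffter array `H(m,n;h,k)` (so `mh = nk`): `ω_r` is a permutation of the filled cells which is
a product of `m` disjoint `h`-cycles, `ω_c` a product of `n` disjoint `k`-cycles, and
`ω_r ∘ ω_c` is a single cycle of length `nk`. Then either `m,n,h,k` are all odd; or `m` is odd,
`n` is even and `h` is even; or `m` is even, `n` is odd and `k` is even. -/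
theorem compatible_orderings_parity (m n h k : ℕ) (hmh : m * h = n * k)
    {α : Type*} [Fintype α] [DecidableEq α]
    (σr σc : Equiv.Perm α)
    (hr : σr.cycleType = Multiset.replicate m h)
    (hc : σc.cycleType = Multiset.replicate n k)
    (hcomp : (σr * σc).cycleType = {n * k}) :
    (Odd m ∧ Odd n ∧ Odd h ∧ Odd k) ∨
    (Odd m ∧ Even n ∧ Even h) ∨
    (Even m ∧ Odd n ∧ Even k) := by
  rw [← replicate_one] at hcomp
  have hsign := Perm.sign_mul σr σc
  rw [Perm.sign_eq_neg_one_pow_of_cycleType_eq_replicate hcomp,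
    Perm.sign_eq_neg_one_pow_of_cycleType_eq_replicate hr,
    Perm.sign_eq_neg_one_pow_of_cycleType_eq_replicate hc, ← pow_add, hmh] at hsign
  have hodd : Odd (m + n + n * k) := by
    have hparity := Int.even_iff_even_of_units_neg_one_pow_eq hsign
    simp only [← Nat.not_even_iff_odd, Nat.even_add, one_mul] at hparity ⊢
    tauto
  exact parity_cases_of_mul_eq_of_odd hmh hodd
end

section
/- Let A be a Heffter array H(m,n;h,k) and suppose each row admits a simple ordering. For each row i, let Γ_i be the closed walk in Z_{2mh+1} whose vertices are 0 and the partial sums s_1,...,s_{h-1} of the chosen simple ordering of row i (with s_h = 0); Γ_i is an h-cycle. Then the multiset of differences ⋃_i Δ(Γ_i), where Δ(Γ) = {x - y : x,y adjacent vertices of Γ}, equals Z_{2mh+1} \ {0}, i.e. the collection {Γ_1,...,Γ_m} is a (2mh+1, C_h, 1)-difference family. -/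
/-- The vertex list of the closed walk `Γ_i` attached to a row `r` of length `h`:
the partial sums `0 = s_0, s_1, ..., s_{h-1}` of the (simple) ordering of the row. -/
def rowCycleVertices {v : ℕ} (h : ℕ) (r : List (ZMod v)) : List (ZMod v) :=
  (List.range h).map fun j => (r.take j).sum

/-- The multiset of differences `ΔΓ = {x - y : x, y adjacent vertices}` of a cycle given by
its cyclically ordered vertex list. -/
def cycleDiffs {v : ℕ} (l : List (ZMod v)) : Multiset (ZMod v) :=
  (↑(List.zipWith (· - ·) (l.rotate 1) l) : Multiset (ZMod v))
    + (↑(List.zipWith (· - ·) l (l.rotate 1)) : Multiset (ZMod v))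

/-!
Because the row sums to `0`, the walk `0, s₁, …, s_{h-1}` closes up, and its consecutive
differences `s_{j+1} - s_j` are exactly the entries of the row; so `ΔΓ_i` is row `i` together
with its negatives. The Heffter condition puts exactly one of `±x` in the union of the rows for
each `x ≠ 0`, hence every nonzero element occurs exactly once in `⋃ ΔΓ_i`. The vertices are
distinct because, rotated by one step, they are the partial sums of the simple ordering.
-/

namespace List

theorem map_range_sum_take_rotate_one {M : Type*} [AddMonoid M] {r : List M} (hr : r.sum = 0) :
    ((range r.length).map fun j => (r.take j).sum).rotate 1
      = (range r.length).map fun j => (r.take (j + 1)).sum := by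
  rcases hn : r.length with _ | n
  · rfl
  · conv_lhs => rw [range_succ_eq_map]
    rw [range_succ, map_cons, map_append, rotate_cons_succ, rotate_zero,
      map_map, map_singleton, ← hn, take_length, hr, take_zero, sum_nil]
    rfl

theorem zipWith_sub_sum_take_succ_sum_take {G : Type*} [AddCommGroup G] (r : List G) :
    zipWith (· - ·) ((range r.length).map fun j => (r.take (j + 1)).sum)
      ((range r.length).map fun j => (r.take j).sum) = r := by
  rw [zipWith_map, zipWith_self]
  refine ext_getElem (by simp) fun j _ hj => ?_
  simp [sum_take_succ r j hj]

end List

section Cycles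

variable {v h : ℕ} {r : List (ZMod v)}

theorem rowCycleVertices_rotate_one (hlen : r.length = h) (hsum : r.sum = 0) :
    (rowCycleVertices h r).rotate 1 = (List.range h).map fun j => (r.take (j + 1)).sum := by
  subst hlen
  exact List.map_range_sum_take_rotate_one hsum

theorem zipWith_sub_rotate_one_rowCycleVertices (hlen : r.length = h) (hsum : r.sum = 0) :
    List.zipWith (· - ·) ((rowCycleVertices h r).rotate 1) (rowCycleVertices h r) = r := by
  rw [rowCycleVertices_rotate_one hlen hsum, rowCycleVertices, ← hlen]
  exact List.zipWith_sub_sum_take_succ_sum_take r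

theorem cycleDiffs_eq_add_map_neg (l : List (ZMod v)) :
    cycleDiffs l = (List.zipWith (· - ·) (l.rotate 1) l : Multiset (ZMod v))
      + Multiset.map Neg.neg (List.zipWith (· - ·) (l.rotate 1) l : Multiset (ZMod v)) := by
  rw [cycleDiffs, Multiset.map_coe, List.map_zipWith, List.zipWith_comm (as := l)]
  simp only [neg_sub]

theorem cycleDiffs_rowCycleVertices (hlen : r.length = h) (hsum : r.sum = 0) :
    cycleDiffs (rowCycleVertices h r) = (r : Multiset (ZMod v)) + Multiset.map Neg.neg r := by
  rw [cycleDiffs_eq_add_map_neg, zipWith_sub_rotate_one_rowCycleVertices hlen hsum]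

end Cycles

theorem Multiset.add_map_neg_eq_univ_erase_zero {G : Type*} [AddGroup G] [Fintype G]
    [DecidableEq G] {S : Multiset G} (h0 : 0 ∉ S)
    (hpairs : ∀ x : G, x ≠ 0 → S.count x + S.count (-x) = 1) :
    S + S.map Neg.neg = (Finset.univ.erase 0).val := by
  ext x
  have hcount_neg : (S.map Neg.neg).count x = S.count (-x) := by
    simpa using S.count_map_eq_count' Neg.neg neg_injective (-x)
  rw [count_add, hcount_neg, count_eq_of_nodup (Finset.univ.erase 0).nodup]
  simp only [Finset.mem_val, Finset.mem_erase, Finset.mem_univ, and_true]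
  by_cases hx : x = 0
  · subst hx
    simp [count_eq_zero_of_notMem h0]
  · simp [hpairs x hx, hx]

theorem rows_give_difference_family_general (m h : ℕ)
    (r : Fin m → List (ZMod (2 * m * h + 1)))
    (hlen : ∀ i, (r i).length = h)
    (h0 : ∀ i, (0 : ZMod (2 * m * h + 1)) ∉ r i)
    (hsum : ∀ i, (r i).sum = 0)
    (hsimple : ∀ i, ((List.range h).map fun j => ((r i).take (j + 1)).sum).Nodup)
    (hpairs : ∀ x : ZMod (2 * m * h + 1), x ≠ 0 →
      (∑ i, (↑(r i) : Multiset (ZMod (2 * m * h + 1))).count x)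
        + (∑ i, (↑(r i) : Multiset (ZMod (2 * m * h + 1))).count (-x)) = 1) :
    (∀ i, (rowCycleVertices h (r i)).Nodup ∧ (rowCycleVertices h (r i)).length = h) ∧
    ∑ i, cycleDiffs (rowCycleVertices h (r i))
      = (Finset.univ.erase (0 : ZMod (2 * m * h + 1))).val := by
  refine ⟨fun i => ⟨?_, by simp [rowCycleVertices]⟩, ?_⟩
  · rw [← List.nodup_rotate (n := 1), rowCycleVertices_rotate_one (hlen i) (hsum i)]
    exact hsimple i
  · set S : Multiset (ZMod (2 * m * h + 1)) := ∑ i, ↑(r i)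
    have hdiffs : ∑ i, cycleDiffs (rowCycleVertices h (r i)) = S + S.map Neg.neg := by
      simp only [cycleDiffs_rowCycleVertices (hlen _) (hsum _), Finset.sum_add_distrib, S,
        ← Multiset.coe_mapAddMonoidHom, map_sum]
    rw [hdiffs]
    refine Multiset.add_map_neg_eq_univ_erase_zero ?_ fun x hx => ?_
    · simpa [S, Multiset.mem_sum] using h0
    · simpa only [S, Multiset.count_sum'] using hpairs x hx

/-- Let the rows of a Heffter array `H(m,n;h,k)` (mh = nk) be given, each of
length `h`, with nonzero entries, summing to `0` in `Z_{2mh+1}`, each with distinct partial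
sums (a simple ordering), and with exactly one of `±x` occurring exactly once among all rows
for every nonzero `x`. Then each vertex list `Γ_i` is a genuine `h`-cycle (h distinct
vertices), and the multiset of differences `⋃_i ΔΓ_i` is exactly `Z_{2mh+1} \ {0}`:
`{Γ_1,...,Γ_m}` is a `(2mh+1, C_h, 1)`-difference family. -/
theorem rows_give_difference_family (m h : ℕ) (hh : 3 ≤ h)
    (r : Fin m → List (ZMod (2 * m * h + 1)))
    (hlen : ∀ i, (r i).length = h)
    (h0 : ∀ i, (0 : ZMod (2 * m * h + 1)) ∉ r i)
    (hsum : ∀ i, (r i).sum = 0)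
    (hsimple : ∀ i, ((List.range h).map fun j => ((r i).take (j + 1)).sum).Nodup)
    (hpairs : ∀ x : ZMod (2 * m * h + 1), x ≠ 0 →
      (∑ i, (↑(r i) : Multiset (ZMod (2 * m * h + 1))).count x)
        + (∑ i, (↑(r i) : Multiset (ZMod (2 * m * h + 1))).count (-x)) = 1) :
    (∀ i, (rowCycleVertices h (r i)).Nodup ∧ (rowCycleVertices h (r i)).length = h) ∧
    ∑ i, cycleDiffs (rowCycleVertices h (r i))
      = (Finset.univ.erase (0 : ZMod (2 * m * h + 1))).val :=
  rows_give_difference_family_general m h r hlen h0 hsum hsimple hpairs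
end

section
/- If an m×n array with nonzero entries in Z_{2nk+1} satisfies all conditions of a Heffter array H(n;k) in the square case (m = n, h = k) and n admits a transversal T of filled cells (a set of n filled cells, one in each row and one in each column), then the array obtained by negating the entry in each cell of T is a non-zero sum Heffter array NH(n;k): it has the same skeleton, still represents each pair {x,-x} exactly once, and every row sum and column sum is nonzero in Z_{2nk+1}. -/
/-!
Each row and each column of the array contains exactly one cell of the transversal, so negating
the entry `a` there turns the vanishing line sum into `-2a`. This is nonzero because `2` is a
unit modulo the odd number `2nk + 1`. Negation merely swaps the two representatives of the pair
`{x, -x}`, so skeleton and pair condition are untouched.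
-/

open Finset

lemma ZMod.isUnit_two_of_odd {m : ℕ} (hm : Odd m) : IsUnit (2 : ZMod m) := by
  simpa using (ZMod.unitOfCoprime 2 (Nat.coprime_two_left.mpr hm)).isUnit

lemma Option.map_neg_eq_some_or_eq_some_neg_iff {R : Type*} [InvolutiveNeg R] (o : Option R)
    (x : R) :
    (o.map (fun a => -a) = some x ∨ o.map (fun a => -a) = some (-x)) ↔
      (o = some x ∨ o = some (-x)) := by
  cases o with
  | none => simp
  | some a =>
    simp only [Option.map_some, Option.some.injEq, neg_eq_iff_eq_neg, neg_neg]
    exact or_comm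

section NegateOneEntry

variable {ι R : Type*} [Fintype ι] [DecidableEq ι] [Ring R]

lemma sum_getD_ite_map_neg (f : ι → Option R) (j₀ : ι) :
    ∑ j, (if j = j₀ then (f j).map (fun a => -a) else f j).getD 0 =
      ∑ j, (f j).getD 0 - 2 * (f j₀).getD 0 := by
  have hpoint : ∀ j, (if j = j₀ then (f j).map (fun a => -a) else f j).getD 0 =
      (f j).getD 0 - if j = j₀ then 2 * (f j₀).getD 0 else 0 := by
    intro j
    split_ifs with h
    · subst h
      cases f j with
      | none => simp
      | some a =>
        rw [Option.map_some, Option.getD_some, Option.getD_some, two_mul, sub_add_cancel_left]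
    · rw [sub_zero]
  simp only [hpoint, sum_sub_distrib, sum_ite_eq', mem_univ, if_true]

lemma sum_getD_ite_map_neg_ne_zero (h2 : IsUnit (2 : R)) (f : ι → Option R)
    (hf : ∑ j, (f j).getD 0 = 0) (j₀ : ι) (hj₀ : (f j₀).getD 0 ≠ 0) :
    ∑ j, (if j = j₀ then (f j).map (fun a => -a) else f j).getD 0 ≠ 0 := by
  rw [sum_getD_ite_map_neg, hf, zero_sub, neg_ne_zero]
  exact fun h => hj₀ (h2.mul_right_eq_zero.mp h)

end NegateOneEntry

theorem negate_transversal_gives_nonzero_sum_heffter_general (n k : ℕ)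
    (A : Fin n → Fin n → Option (ZMod (2 * n * k + 1)))
    (hne : ∀ i j a, A i j = some a → a ≠ 0)
    (hpairs : ∀ x : ZMod (2 * n * k + 1), x ≠ 0 →
      ∃! p : Fin n × Fin n, A p.1 p.2 = some x ∨ A p.1 p.2 = some (-x))
    (hrsum : ∀ i, ∑ j, (A i j).getD 0 = 0)
    (hcsum : ∀ j, ∑ i, (A i j).getD 0 = 0)
    (σ : Equiv.Perm (Fin n))
    (hσ : ∀ i, (A i (σ i)).isSome)
    (B : Fin n → Fin n → Option (ZMod (2 * n * k + 1)))
    (hB : ∀ i j, B i j = if j = σ i then (A i j).map (fun a => -a) else A i j) :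
    (∀ i j, (B i j).isSome ↔ (A i j).isSome) ∧
    (∀ x : ZMod (2 * n * k + 1), x ≠ 0 →
      ∃! p : Fin n × Fin n, B p.1 p.2 = some x ∨ B p.1 p.2 = some (-x)) ∧
    (∀ i, ∑ j, (B i j).getD 0 ≠ 0) ∧
    (∀ j, ∑ i, (B i j).getD 0 ≠ 0) := by
  have h2 : IsUnit (2 : ZMod (2 * n * k + 1)) :=
    ZMod.isUnit_two_of_odd (by rw [mul_assoc]; exact odd_two_mul_add_one _)
  have hdiag : ∀ i, (A i (σ i)).getD 0 ≠ 0 := fun i => by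
    obtain ⟨a, ha⟩ := Option.isSome_iff_exists.mp (hσ i)
    rw [ha, Option.getD_some]
    exact hne _ _ a ha
  have hpair_iff : ∀ x (p : Fin n × Fin n),
      (B p.1 p.2 = some x ∨ B p.1 p.2 = some (-x)) ↔
        (A p.1 p.2 = some x ∨ A p.1 p.2 = some (-x)) :=
    fun x p => by
      rw [hB]
      split_ifs
      · exact Option.map_neg_eq_some_or_eq_some_neg_iff _ x
      · rfl
  refine ⟨fun i j => ?_, fun x hx => ?_, fun i => ?_, fun j => ?_⟩
  · rw [hB]
    split_ifs <;> simp
  · exact existsUnique_congr (hpair_iff x) |>.mpr (hpairs x hx)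
  · simp only [hB]
    exact sum_getD_ite_map_neg_ne_zero h2 (A i) (hrsum i) (σ i) (hdiag i)
  · have hcond : ∀ i, j = σ i ↔ i = σ.symm j := fun i => by rw [Equiv.eq_symm_apply, eq_comm]
    simp only [hB, hcond]
    exact sum_getD_ite_map_neg_ne_zero h2 (fun i => A i j) (hcsum j) (σ.symm j)
      (by simpa using hdiag (σ.symm j))

/-- If an `n × n` array with nonzero entries in `Z_{2nk+1}` satisfies all the
conditions of a square Heffter array `H(n;k)` and admits a transversal `T` of filled cells
(one filled cell in each row and each column, described by a permutation `σ`), then negating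
the entry in each cell of `T` yields a non-zero sum Heffter array `NH(n;k)`: same skeleton,
each pair `{x,-x}` still represented exactly once, and every row and column sum is nonzero. -/
theorem negate_transversal_gives_nonzero_sum_heffter (n k : ℕ)
    (A : Fin n → Fin n → Option (ZMod (2 * n * k + 1)))
    (hne : ∀ i j a, A i j = some a → a ≠ 0)
    (hrow : ∀ i, (Finset.univ.filter fun j => (A i j).isSome).card = k)
    (hcol : ∀ j, (Finset.univ.filter fun i => (A i j).isSome).card = k)
    (hpairs : ∀ x : ZMod (2 * n * k + 1), x ≠ 0 →
      ∃! p : Fin n × Fin n, A p.1 p.2 = some x ∨ A p.1 p.2 = some (-x))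
    (hrsum : ∀ i, ∑ j, (A i j).getD 0 = 0)
    (hcsum : ∀ j, ∑ i, (A i j).getD 0 = 0)
    (σ : Equiv.Perm (Fin n))
    (hσ : ∀ i, (A i (σ i)).isSome)
    (B : Fin n → Fin n → Option (ZMod (2 * n * k + 1)))
    (hB : ∀ i j, B i j = if j = σ i then (A i j).map (fun a => -a) else A i j) :
    (∀ i j, (B i j).isSome ↔ (A i j).isSome) ∧
    (∀ x : ZMod (2 * n * k + 1), x ≠ 0 →
      ∃! p : Fin n × Fin n, B p.1 p.2 = some x ∨ B p.1 p.2 = some (-x)) ∧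
    (∀ i, ∑ j, (B i j).getD 0 ≠ 0) ∧
    (∀ j, ∑ i, (B i j).getD 0 ≠ 0) :=
  negate_transversal_gives_nonzero_sum_heffter_general n k A hne hpairs hrsum hcsum σ hσ B hB
end
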